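/- arXiv:1502.01530 — 2 statements merged into one kernel-verified Lean document; each statement's English description precedes it below -/
import Mathlib

section
/- Let Φ be a Schur idempotent on B(H). Then ran Φ is hyperreflexive if and only if Φ ∈ 𝔉H; moreover, in that case k(ran Φ) ≤ λ(Φ) and λ(Φ) ≤ k(ran Φ)·‖id − Φ‖. -/
open scoped InnerProductSpace Pointwise

noncomputable section

namespace SchurHyper

/-- `B H` is the algebra of bounded linear operators on `H`. -/
abbrev B (H : Type*) [NormedAddCommGroup H] [InnerProductSpace ℂ H] : Type _ := H →L[ℂ] H

variable (H : Type*) [NormedAddCommGroup H] [InnerProductSpace ℂ H]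

/-- A linear functional on `B H` is *normal* (weak* continuous) if it arises from
the duality with the trace class, i.e. it is of the form
`T ↦ ∑ₙ ⟪yₙ, T xₙ⟫` for square-summable sequences `(xₙ)`, `(yₙ)`
(recall that the inner product is conjugate-linear in its first slot). -/
def IsNormalFunctional (ω : B H →ₗ[ℂ] ℂ) : Prop :=
  ∃ x y : ℕ → H, Summable (fun n => ‖x n‖ ^ 2) ∧ Summable (fun n => ‖y n‖ ^ 2) ∧
    ∀ T : B H, ω T = ∑' n, ⟪y n, T (x n)⟫_ℂ

/-- The weak* topology on `B H`: the topology induced by the normal functionals. -/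
def weakStarTopology : TopologicalSpace (B H) :=
  TopologicalSpace.induced
    (fun (T : B H) (ω : {ω : B H →ₗ[ℂ] ℂ // IsNormalFunctional H ω}) => ω.1 T)
    inferInstance

/-- A set of operators is weak* closed if it is closed in the weak* topology. -/
def WStarClosed (X : Set (B H)) : Prop := @IsClosed _ (weakStarTopology H) X

/-- The weak* closure of a set of operators. -/
def wStarClosure (X : Set (B H)) : Set (B H) := @closure _ (weakStarTopology H) X

/-- A map on `B H` is weak* continuous if it is continuous with respect to the
weak* topology on both sides. -/
def WStarContinuous (Φ : B H →L[ℂ] B H) : Prop :=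
  @Continuous _ _ (weakStarTopology H) (weakStarTopology H) Φ

variable {H}
variable [CompleteSpace H]

/-- A maximal abelian selfadjoint subalgebra of `B H`: an abelian selfadjoint
subalgebra which contains every operator commuting with it (equivalently, it
coincides with its own commutant). -/
def IsMasa (D : StarSubalgebra ℂ (B H)) : Prop :=
  (∀ A ∈ D, ∀ C ∈ D, A * C = C * A) ∧
  (∀ T : B H, (∀ A ∈ D, T * A = A * T) → T ∈ D)

/-- A Schur multiplier: a weak* continuous `D`-bimodule map on `B H`. -/
def IsSchurMultiplier (D : StarSubalgebra ℂ (B H)) (Φ : B H →L[ℂ] B H) : Prop :=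
  WStarContinuous H Φ ∧ ∀ A ∈ D, ∀ C ∈ D, ∀ T : B H, Φ (A * T * C) = A * Φ T * C

/-- A Schur idempotent: an idempotent Schur multiplier. -/
def IsSchurIdempotent (D : StarSubalgebra ℂ (B H)) (Φ : B H →L[ℂ] B H) : Prop :=
  IsSchurMultiplier D Φ ∧ Φ.comp Φ = Φ

/-- A subspace `X ⊆ B H` is a `D`-bimodule if `D X D ⊆ X`. -/
def IsBimodule (D : StarSubalgebra ℂ (B H)) (X : Submodule ℂ (B H)) : Prop :=
  ∀ A ∈ D, ∀ C ∈ D, ∀ T ∈ X, A * T * C ∈ X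

/-- The Arveson distance `α(T, X)`. -/
def arveson (T : B H) (X : Set (B H)) : ℝ :=
  ⨆ ξ : {ξ : H // ‖ξ‖ = 1}, ⨅ S : X, ‖T ξ.1 - S.1 ξ.1‖

/-- The set of hyperreflexivity constants of `X`. -/
def hyperSet (X : Set (B H)) : Set ℝ :=
  {k | 0 < k ∧ ∀ T : B H, Metric.infDist T X ≤ k * arveson T X}

/-- A subspace is hyperreflexive if `d(T, X) ≤ k ⬝ α(T, X)` for some `k > 0`. -/
def Hyperreflexive (X : Set (B H)) : Prop := (hyperSet X).Nonempty

/-- The hyperreflexivity constant `k(X)`: the least constant that works. -/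
def hyperConst (X : Set (B H)) : ℝ := sInf (hyperSet X)

/-- The set of constants `λ` witnessing that a Schur idempotent lies in `𝔉H`. -/
def lamSet (Φ : B H →L[ℂ] B H) : Set ℝ :=
  {l | 0 < l ∧ ∀ T : B H, ‖T - Φ T‖ ≤ l * arveson T (Set.range Φ)}

/-- The class `𝔉H` of Schur idempotents `Φ` such that
`‖T - Φ T‖ ≤ λ ⬝ α(T, ran Φ)` for some `λ > 0` and all `T`. -/
def MemFH (D : StarSubalgebra ℂ (B H)) (Φ : B H →L[ℂ] B H) : Prop :=
  IsSchurIdempotent D Φ ∧ (lamSet Φ).Nonempty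

/-- The constant `λ(Φ)`: the least constant witnessing membership of `𝔉H`. -/
def lam (Φ : B H →L[ℂ] B H) : ℝ := sInf (lamSet Φ)

/-- A ternary masa-bimodule condition: `S T* R ∈ M` whenever `S, T, R ∈ M`. -/
def IsTernary (M : Submodule ℂ (B H)) : Prop :=
  ∀ S ∈ M, ∀ T ∈ M, ∀ R ∈ M, S * star T * R ∈ M

end SchurHyper

open SchurHyper

/-!
Write `X = ran Φ` and `c = ‖id - Φ‖`. Since `Φ` fixes `X`, for every `S ∈ X` we have
`T - Φ T = (id - Φ) (T - S)`, hence `d(T, X) ≤ ‖T - Φ T‖ ≤ c · d(T, X)`. The first inequality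
turns every `λ` for `Φ` into a hyperreflexivity constant of `X`; the second turns `k(X)` into
every `λ ≥ k(X) · c`.
-/

theorem ContinuousLinearMap.norm_sub_apply_le_mul_infDist_range {𝕜 E : Type*}
    [RCLike 𝕜] [NormedAddCommGroup E] [NormedSpace 𝕜 E] {P : E →L[𝕜] E} (hP : P.comp P = P)
    (x : E) : ‖x - P x‖ ≤ ‖ContinuousLinearMap.id 𝕜 E - P‖ * Metric.infDist x (Set.range P) := by
  have : Nonempty (Set.range P) := ⟨⟨P x, x, rfl⟩⟩
  rw [Metric.infDist_eq_iInf, Real.mul_iInf_of_nonneg (norm_nonneg _)]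
  refine le_ciInf ?_
  rintro ⟨_, u, rfl⟩
  have hPu : P (P u) = P u := congr($hP u)
  calc ‖x - P x‖ = ‖(ContinuousLinearMap.id 𝕜 E - P) (x - P u)‖ := by
        simp only [sub_apply, ContinuousLinearMap.id_apply, map_sub, hPu]
        abel_nf
    _ ≤ _ := by rw [dist_eq_norm]; exact le_opNorm _ _

namespace SchurHyper

variable {H : Type*} [NormedAddCommGroup H] [InnerProductSpace ℂ H]

theorem arveson_nonneg (T : B H) (X : Set (B H)) : 0 ≤ arveson T X :=
  Real.iSup_nonneg fun _ => Real.iInf_nonneg fun _ => norm_nonneg _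

theorem hyperConst_nonneg {X : Set (B H)} (hX : Hyperreflexive X) : 0 ≤ hyperConst X :=
  le_csInf hX fun _ hk => hk.1.le

theorem infDist_le_hyperConst_mul_arveson {X : Set (B H)} (hX : Hyperreflexive X) (T : B H) :
    Metric.infDist T X ≤ hyperConst X * arveson T X := by
  obtain ⟨k, hk⟩ := hX
  rcases (arveson_nonneg T X).eq_or_lt with hα | hα
  · simpa [← hα] using hk.2 T
  · rw [← div_le_iff₀ hα]
    exact le_csInf ⟨k, hk⟩ fun l hl => (div_le_iff₀ hα).2 (hl.2 T)

theorem lamSet_subset_hyperSet (Φ : B H →L[ℂ] B H) : lamSet Φ ⊆ hyperSet (Set.range Φ) :=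
  fun _ hl => ⟨hl.1, fun T =>
    (Metric.infDist_le_dist_of_mem (Set.mem_range_self T)).trans
      ((dist_eq_norm T (Φ T)).trans_le (hl.2 T))⟩

theorem mem_lamSet_of_hyperConst_mul_le {Φ : B H →L[ℂ] B H} (hΦ : Φ.comp Φ = Φ)
    (hX : Hyperreflexive (Set.range Φ)) {l : ℝ} (hl0 : 0 < l)
    (hl : hyperConst (Set.range Φ) * ‖ContinuousLinearMap.id ℂ (B H) - Φ‖ ≤ l) :
    l ∈ lamSet Φ := by
  refine ⟨hl0, fun T => ?_⟩
  have hα := arveson_nonneg T (Set.range Φ)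
  calc ‖T - Φ T‖
      ≤ ‖ContinuousLinearMap.id ℂ (B H) - Φ‖ * Metric.infDist T (Set.range Φ) :=
        ContinuousLinearMap.norm_sub_apply_le_mul_infDist_range hΦ T
    _ ≤ ‖ContinuousLinearMap.id ℂ (B H) - Φ‖ * (hyperConst (Set.range Φ) * arveson T (Set.range Φ)) :=
        mul_le_mul_of_nonneg_left (infDist_le_hyperConst_mul_arveson hX T) (by positivity)
    _ ≤ l * arveson T (Set.range Φ) := by
        rw [← mul_assoc, mul_comm ‖_‖]
        exact mul_le_mul_of_nonneg_right hl hα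

end SchurHyper

theorem stmt2_general {H : Type*} [NormedAddCommGroup H] [InnerProductSpace ℂ H] [CompleteSpace H]
    (D : StarSubalgebra ℂ (B H))
    (Φ : B H →L[ℂ] B H) (hΦ : IsSchurIdempotent D Φ) :
    (Hyperreflexive (Set.range ⇑Φ) ↔ MemFH D Φ) ∧
    (Hyperreflexive (Set.range ⇑Φ) →
      hyperConst (Set.range ⇑Φ) ≤ lam Φ ∧
      lam Φ ≤ hyperConst (Set.range ⇑Φ) * ‖ContinuousLinearMap.id ℂ (B H) - Φ‖) := by
  have mem_lamSet := mem_lamSet_of_hyperConst_mul_le hΦ.2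
  have lamSet_nonempty (hX : Hyperreflexive (Set.range Φ)) : (lamSet Φ).Nonempty :=
    ⟨_, mem_lamSet hX (by positivity [hyperConst_nonneg hX]) (le_add_of_nonneg_right zero_le_one)⟩
  refine ⟨⟨fun hX => ⟨hΦ, lamSet_nonempty hX⟩,
    fun h => h.2.mono (lamSet_subset_hyperSet Φ)⟩, fun hX => ⟨?_, ?_⟩⟩
  · exact csInf_le_csInf ⟨0, fun k hk => hk.1.le⟩ (lamSet_nonempty hX) (lamSet_subset_hyperSet Φ)
  · refine le_of_forall_pos_le_add fun ε hε => csInf_le ⟨0, fun l hl => hl.1.le⟩ ?_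
    exact mem_lamSet hX (by positivity [hyperConst_nonneg hX])
      (le_add_of_nonneg_right hε.le)

/-- for a Schur idempotent `Φ`, `ran Φ` is hyperreflexive iff
`Φ ∈ 𝔉H`; in that case `k(ran Φ) ≤ λ(Φ)` and `λ(Φ) ≤ k(ran Φ)·‖id − Φ‖`. -/
theorem stmt2 {H : Type*} [NormedAddCommGroup H] [InnerProductSpace ℂ H] [CompleteSpace H]
    [TopologicalSpace.SeparableSpace H]
    (D : StarSubalgebra ℂ (B H)) (hD : IsMasa D)
    (Φ : B H →L[ℂ] B H) (hΦ : IsSchurIdempotent D Φ) :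
    (Hyperreflexive (Set.range ⇑Φ) ↔ MemFH D Φ) ∧
    (Hyperreflexive (Set.range ⇑Φ) →
      hyperConst (Set.range ⇑Φ) ≤ lam Φ ∧
      lam Φ ≤ hyperConst (Set.range ⇑Φ) * ‖ContinuousLinearMap.id ℂ (B H) - Φ‖) :=
  stmt2_general D Φ hΦ
end
end

section
/- Let U ⊆ B(H) be a hyperreflexive weak* closed masa-bimodule and Φ ∈ 𝔉H. Then the intersection U ∩ ran Φ is hyperreflexive and k(U ∩ ran Φ) ≤ λ(Φ) + ‖Φ‖·k(U). -/
open scoped InnerProductSpace Pointwise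

noncomputable section

open SchurHyper

/-!
A Schur multiplier `Φ` maps `U` into itself. Indeed, for `T ∈ U` and a vector `ξ` the projections
`P` onto `[U ξ]` and `E` onto `[D ξ]` lie in the masa `D`, and `(1 - P) T E = 0`; hence
`(1 - P) Φ(T) E = Φ((1 - P) T E) = 0`, so `Φ(T) ξ ∈ [U ξ]`. Thus `α(Φ(T), U) = 0`, and `Φ(T) ∈ U`
because `U` is closed and hyperreflexive. Consequently `Φ` maps `U` into `U ∩ ran Φ`, and since
`α(T, ·)` is antitone,
`d(T, U ∩ ran Φ) ≤ ‖T - Φ(T)‖ + d(Φ(T), U ∩ ran Φ) ≤ λ α(T, ran Φ) + ‖Φ‖ d(T, U)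
  ≤ (λ + ‖Φ‖ k) α(T, U ∩ ran Φ)`.
-/

theorem LipschitzWith.infDist_image_le {α β : Type*} [PseudoMetricSpace α] [PseudoMetricSpace β]
    {f : α → β} {K : NNReal} (hf : LipschitzWith K f) {s : Set α} (hs : s.Nonempty) (x : α) :
    Metric.infDist (f x) (f '' s) ≤ K * Metric.infDist x s := by
  have : Nonempty s := hs.to_subtype
  rw [Metric.infDist_eq_iInf (x := x), Real.mul_iInf_of_nonneg K.coe_nonneg]
  exact le_ciInf fun y =>
    (Metric.infDist_le_dist_of_mem (Set.mem_image_of_mem f y.2)).trans (hf.dist_le_mul x y)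

namespace SchurHyper

variable {H : Type*} [NormedAddCommGroup H] [InnerProductSpace ℂ H]

theorem IsNormalFunctional.continuous {ω : B H →ₗ[ℂ] ℂ} (hω : IsNormalFunctional H ω) :
    Continuous ω := by
  obtain ⟨x, y, hx, hy, hωxy⟩ := hω
  have hxy : Summable fun n => ‖x n‖ * ‖y n‖ :=
    .of_nonneg_of_le (fun n => by positivity)
      (fun n => by nlinarith [two_mul_le_add_sq ‖x n‖ ‖y n‖]) ((hx.add hy).div_const 2)
  refine AddMonoidHomClass.continuous_of_bound ω (∑' n, ‖x n‖ * ‖y n‖) fun T => ?_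
  rw [hωxy]
  refine tsum_of_norm_bounded (hxy.hasSum.mul_right ‖T‖) fun n => ?_
  calc ‖⟪y n, T (x n)⟫_ℂ‖ ≤ ‖y n‖ * (‖T‖ * ‖x n‖) :=
        (norm_inner_le_norm _ _).trans (by gcongr; exact T.le_opNorm _)
    _ = ‖x n‖ * ‖y n‖ * ‖T‖ := by ring

theorem WStarClosed.isClosed {X : Set (B H)} (hX : WStarClosed H X) : IsClosed X :=
  @IsClosed.preimage _ _ _ (weakStarTopology H) id
    (continuous_induced_rng.2 <| continuous_pi fun ω => ω.2.continuous) _ hX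

theorem iInf_norm_sub_apply_le (T : B H) {X : Set (B H)} {S : B H} (hS : S ∈ X) (ξ : H) :
    ⨅ R : X, ‖T ξ - R.1 ξ‖ ≤ ‖T ξ - S ξ‖ := by
  refine ciInf_le (f := fun R : X => ‖T ξ - R.1 ξ‖) ⟨0, ?_⟩ ⟨S, hS⟩
  rintro _ ⟨R, rfl⟩
  positivity

theorem arveson_anti (T : B H) {X Y : Set (B H)} (hXY : X ⊆ Y) (hX : X.Nonempty) :
    arveson T Y ≤ arveson T X := by
  obtain ⟨S, hS⟩ := hX
  have : Nonempty X := ⟨⟨S, hS⟩⟩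
  have hbdd : BddAbove (Set.range fun ξ : {ξ : H // ‖ξ‖ = 1} => ⨅ R : X, ‖T ξ.1 - R.1 ξ.1‖) := by
    refine ⟨‖T - S‖, ?_⟩
    rintro _ ⟨ξ, rfl⟩
    refine (iInf_norm_sub_apply_le T hS ξ.1).trans ?_
    simpa [ξ.2] using (T - S).le_opNorm ξ.1
  refine Real.iSup_le (fun ξ => ?_) (arveson_nonneg T X)
  exact (le_ciInf fun R => iInf_norm_sub_apply_le T (hXY R.2) ξ.1).trans (le_ciSup hbdd ξ)

theorem arveson_eq_zero_of_forall_mem_closure {T : B H} {X : Set (B H)}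
    (hT : ∀ ξ : H, T ξ ∈ closure ((fun S : B H => S ξ) '' X)) : arveson T X = 0 := by
  refine le_antisymm (Real.iSup_le (fun ξ => le_of_forall_pos_le_add fun ε hε => ?_) le_rfl)
    (arveson_nonneg T X)
  obtain ⟨_, ⟨S, hS, rfl⟩, hdist⟩ := Metric.mem_closure_iff.1 (hT ξ.1) ε hε
  rw [zero_add]
  refine (iInf_norm_sub_apply_le T hS ξ.1).trans ?_
  rw [← dist_eq_norm]
  exact hdist.le

theorem Hyperreflexive.mem_of_arveson_eq_zero {X : Set (B H)} (hX : Hyperreflexive X)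
    (hXcl : IsClosed X) (hXne : X.Nonempty) {T : B H} (hT : arveson T X = 0) : T ∈ X := by
  obtain ⟨k, -, hk⟩ := hX
  refine (hXcl.mem_iff_infDist_zero hXne).2 (le_antisymm ?_ Metric.infDist_nonneg)
  simpa [hT] using hk T

theorem add_mul_mem_hyperSet_inter {U : Set (B H)} (hU : U.Nonempty) {Φ : B H →L[ℂ] B H}
    (hΦU : ∀ S ∈ U, Φ S ∈ U) {l k : ℝ} (hl : l ∈ lamSet Φ) (hk : k ∈ hyperSet U) :
    l + ‖Φ‖ * k ∈ hyperSet (U ∩ Set.range Φ) := by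
  have hΦX : Φ '' U ⊆ U ∩ Set.range Φ := by
    rintro _ ⟨S, hS, rfl⟩
    exact ⟨hΦU S hS, S, rfl⟩
  have hX : (U ∩ Set.range Φ).Nonempty := (hU.image Φ).mono hΦX
  refine ⟨by nlinarith [hl.1, hk.1, norm_nonneg Φ], fun T => ?_⟩
  have hαU := arveson_anti T Set.inter_subset_left hX
  have hαΦ := arveson_anti T Set.inter_subset_right hX
  calc Metric.infDist T (U ∩ Set.range Φ)
      ≤ Metric.infDist (Φ T) (U ∩ Set.range Φ) + dist T (Φ T) :=
        Metric.infDist_le_infDist_add_dist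
    _ ≤ ‖Φ‖ * Metric.infDist T U + l * arveson T (Set.range Φ) := by
        rw [dist_eq_norm]
        gcongr
        · exact (Metric.infDist_le_infDist_of_subset hΦX (hU.image Φ)).trans
            (Φ.lipschitz.infDist_image_le hU T)
        · exact hl.2 T
    _ ≤ ‖Φ‖ * (k * arveson T U) + l * arveson T (Set.range Φ) := by
        gcongr
        exact hk.2 T
    _ ≤ ‖Φ‖ * (k * arveson T (U ∩ Set.range Φ)) + l * arveson T (U ∩ Set.range Φ) := by
        have hk0 := hk.1.le
        have hl0 := hl.1.le
        gcongr
    _ = (l + ‖Φ‖ * k) * arveson T (U ∩ Set.range Φ) := by ring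

theorem hyperreflexive_inter_range {U : Set (B H)} (hU : Hyperreflexive U) (hUne : U.Nonempty)
    {Φ : B H →L[ℂ] B H} (hΦU : ∀ S ∈ U, Φ S ∈ U) (hΦ : (lamSet Φ).Nonempty) :
    Hyperreflexive (U ∩ Set.range Φ) ∧
      hyperConst (U ∩ Set.range Φ) ≤ lam Φ + ‖Φ‖ * hyperConst U := by
  have hsub : lamSet Φ + ‖Φ‖ • hyperSet U ⊆ hyperSet (U ∩ Set.range Φ) := by
    rintro _ ⟨l, hl, _, ⟨k, hk, rfl⟩, rfl⟩
    exact add_mul_mem_hyperSet_inter hUne hΦU hl hk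
  have hne : (lamSet Φ + ‖Φ‖ • hyperSet U).Nonempty := hΦ.add (hU.smul_set)
  refine ⟨hne.mono hsub, ?_⟩
  calc hyperConst (U ∩ Set.range Φ) ≤ sInf (lamSet Φ + ‖Φ‖ • hyperSet U) :=
        csInf_le_csInf ⟨0, fun k hk => hk.1.le⟩ hne hsub
    _ = lam Φ + ‖Φ‖ * hyperConst U := by
        rw [csInf_add hΦ ⟨0, fun l hl => hl.1.le⟩ hU.smul_set
          (BddBelow.smul_of_nonneg ⟨0, fun k hk => hk.1.le⟩ (norm_nonneg Φ)),
          Real.sInf_smul_of_nonneg (norm_nonneg Φ)]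
        rfl

/-- The closed linear span `[M ξ]` of the vectors `S ξ`, `S ∈ M`. -/
def orbitClosure (M : Submodule ℂ (B H)) (ξ : H) : Submodule ℂ H :=
  (M.map (ContinuousLinearMap.apply ℂ H ξ : B H →ₗ[ℂ] H)).topologicalClosure

theorem apply_mem_orbitClosure {M : Submodule ℂ (B H)} {S : B H} (hS : S ∈ M) (ξ : H) :
    S ξ ∈ orbitClosure M ξ :=
  Submodule.le_topologicalClosure _ ⟨S, hS, rfl⟩

theorem coe_orbitClosure (M : Submodule ℂ (B H)) (ξ : H) :
    (orbitClosure M ξ : Set H) = closure ((fun S : B H => S ξ) '' M) := by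
  rw [orbitClosure, Submodule.topologicalClosure_coe, Submodule.map_coe]
  rfl

theorem orbitClosure_mem_invtSubmodule {M : Submodule ℂ (B H)} {A : B H}
    (hA : ∀ S ∈ M, A * S ∈ M) (ξ : H) :
    orbitClosure M ξ ∈ Module.End.invtSubmodule (A : H →ₗ[ℂ] H) := by
  refine Submodule.topologicalClosure_mem_invtSubmodule ?_
  rw [Module.End.mem_invtSubmodule_iff_forall_mem_of_mem]
  rintro _ ⟨S, hS, rfl⟩
  exact ⟨A * S, hA S hS, rfl⟩

section Masa

variable [CompleteSpace H]

open Module.End in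
theorem IsMasa.starProjection_mem {D : StarSubalgebra ℂ (B H)} (hD : IsMasa D)
    (V : Submodule ℂ H) [V.HasOrthogonalProjection]
    (hV : ∀ A ∈ D, V ∈ invtSubmodule (A : H →ₗ[ℂ] H)) : V.starProjection ∈ D := by
  refine hD.2 _ fun A hA => ContinuousLinearMap.coe_injective ?_
  have hVperp : Vᗮ ∈ invtSubmodule (A : H →ₗ[ℂ] H) :=
    ContinuousLinearMap.orthogonal_mem_invtSubmodule <| by
      simpa [ContinuousLinearMap.star_eq_adjoint] using hV _ (star_mem hA)
  have hcomm := LinearMap.IsIdempotentElem.commute_iff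
    (ContinuousLinearMap.isIdempotentElem_toLinearMap_iff.2 V.isIdempotentElem_starProjection)
    |>.2 ⟨by simpa using hV A hA, by simpa using hVperp⟩
  rw [ContinuousLinearMap.toLinearMap_mul, ContinuousLinearMap.toLinearMap_mul]
  exact hcomm.eq

instance (M : Submodule ℂ (B H)) (ξ : H) : CompleteSpace (orbitClosure M ξ) :=
  Submodule.topologicalClosure.completeSpace _

theorem apply_apply_mem_orbitClosure {D : StarSubalgebra ℂ (B H)} (hD : IsMasa D)
    {U : Submodule ℂ (B H)} (hU : IsBimodule D U) {Φ : B H →L[ℂ] B H}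
    (hΦ : ∀ A ∈ D, ∀ C ∈ D, ∀ T : B H, Φ (A * T * C) = A * Φ T * C)
    {T : B H} (hT : T ∈ U) (ξ : H) : Φ T ξ ∈ orbitClosure U ξ := by
  set V := orbitClosure U ξ
  set W := orbitClosure (Subalgebra.toSubmodule D.toSubalgebra) ξ
  have hP : V.starProjection ∈ D := hD.starProjection_mem V fun A hA =>
    orbitClosure_mem_invtSubmodule (fun S hS => by simpa using hU A hA 1 (one_mem D) S hS) ξ
  have hE : W.starProjection ∈ D := hD.starProjection_mem W fun A hA =>
    orbitClosure_mem_invtSubmodule (fun C hC => (Subalgebra.mem_toSubmodule _).2 <|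
      mul_mem hA ((Subalgebra.mem_toSubmodule _).1 hC)) ξ
  have hEξ : W.starProjection ξ = ξ :=
    Submodule.starProjection_eq_self_iff.2 <| by
      simpa using apply_mem_orbitClosure (M := Subalgebra.toSubmodule D.toSubalgebra)
        ((Subalgebra.mem_toSubmodule _).2 (one_mem D)) ξ
  have hTW : W ≤ V.comap (T : H →ₗ[ℂ] H) := by
    refine Submodule.topologicalClosure_minimal _ ?_
      (Submodule.isClosed_topologicalClosure _ |>.preimage T.continuous)
    rintro _ ⟨C, hC, rfl⟩
    exact apply_mem_orbitClosure (by simpa using hU 1 (one_mem D) C hC T hT) ξ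
  have hzero : (1 - V.starProjection) * T * W.starProjection = 0 := by
    ext x
    have hPTE : V.starProjection (T (W.starProjection x)) = T (W.starProjection x) :=
      Submodule.starProjection_eq_self_iff.2 (hTW (W.starProjection_apply_mem x))
    simp [hPTE]
  have hΦfix : V.starProjection (Φ T ξ) = Φ T ξ := by
    have h := congrArg (fun R : B H => R ξ) (hΦ _ (sub_mem (one_mem D) hP) _ hE T)
    simp only [hzero, map_zero, zero_apply, mul_apply_eq_comp, hEξ, sub_apply,
      one_apply_eq_self] at h
    exact (sub_eq_zero.1 h.symm).symm
  rw [← hΦfix]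
  exact V.starProjection_apply_mem _

theorem IsBimodule.apply_mem_of_hyperreflexive {D : StarSubalgebra ℂ (B H)} (hD : IsMasa D)
    {U : Submodule ℂ (B H)} (hU : IsBimodule D U) (hUcl : IsClosed (U : Set (B H)))
    (hUhr : Hyperreflexive (U : Set (B H))) {Φ : B H →L[ℂ] B H}
    (hΦ : ∀ A ∈ D, ∀ C ∈ D, ∀ T : B H, Φ (A * T * C) = A * Φ T * C)
    {T : B H} (hT : T ∈ U) : Φ T ∈ U :=
  hUhr.mem_of_arveson_eq_zero hUcl ⟨0, zero_mem U⟩ <| arveson_eq_zero_of_forall_mem_closure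
    fun ξ => coe_orbitClosure U ξ ▸ apply_apply_mem_orbitClosure hD hU hΦ hT ξ

end Masa

end SchurHyper

theorem stmt14_general {H : Type*} [NormedAddCommGroup H] [InnerProductSpace ℂ H] [CompleteSpace H]
    (D : StarSubalgebra ℂ (B H)) (hD : IsMasa D)
    (U : Submodule ℂ (B H)) (hUbim : IsBimodule D U)
    (hUcl : WStarClosed H (U : Set (B H))) (hUhr : Hyperreflexive (U : Set (B H)))
    (Φ : B H →L[ℂ] B H) (hΦ : MemFH D Φ) :
    Hyperreflexive ((U : Set (B H)) ∩ Set.range ⇑Φ) ∧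
    hyperConst ((U : Set (B H)) ∩ Set.range ⇑Φ) ≤
      lam Φ + ‖Φ‖ * hyperConst (U : Set (B H)) := by
  refine hyperreflexive_inter_range hUhr ⟨0, zero_mem U⟩ (fun S hS => ?_) hΦ.2
  exact hUbim.apply_mem_of_hyperreflexive hD hUcl.isClosed hUhr hΦ.1.1.2 hS

/-- if `U` is a hyperreflexive weak* closed masa-bimodule and
`Φ ∈ 𝔉H`, then `U ∩ ran Φ` is hyperreflexive and
`k(U ∩ ran Φ) ≤ λ(Φ) + ‖Φ‖·k(U)`. -/
theorem stmt14 {H : Type*} [NormedAddCommGroup H] [InnerProductSpace ℂ H] [CompleteSpace H]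
    [TopologicalSpace.SeparableSpace H]
    (D : StarSubalgebra ℂ (B H)) (hD : IsMasa D)
    (U : Submodule ℂ (B H)) (hUbim : IsBimodule D U)
    (hUcl : WStarClosed H (U : Set (B H))) (hUhr : Hyperreflexive (U : Set (B H)))
    (Φ : B H →L[ℂ] B H) (hΦ : MemFH D Φ) :
    Hyperreflexive ((U : Set (B H)) ∩ Set.range ⇑Φ) ∧
    hyperConst ((U : Set (B H)) ∩ Set.range ⇑Φ) ≤
      lam Φ + ‖Φ‖ * hyperConst (U : Set (B H)) :=
  stmt14_general D hD U hUbim hUcl hUhr Φ hΦ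
end
end
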